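/- arXiv:2105.00538 — 4 statements merged into one kernel-verified Lean document; each statement's English description precedes it below -/
import Mathlib

section
/- Let p be a prime, and let α, β be natural numbers with β ≥ 1. Suppose m_0, …, m_{p^β} are natural numbers with m_0 + ⋯ + m_{p^β} = p^α such that this sum is carry-free in base p and such that every index j with m_j ≠ 0 is a carry-free summand of p^β. Then there exists i ∈ {0, p^β} with m_i = p^α and m_j = 0 for all j ≠ i. Consequently the set of possible values of Σ_j j·m_j is exactly {0, p^{α+β}}. -/
/-!
By Kummer's theorem the `p`-adic valuation of `(p ^ n).choose a` counts the carries in the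
base-`p` addition `a + (p ^ n - a)`, while `p` divides `(p ^ n).choose a` for `0 < a < p ^ n`.
So a carry-free summand of `p ^ n` is `0` or `p ^ n`. Applied to the indices, this confines the
support of `m` to `{0, p ^ β}`, and applied once more to `m 0 + m (p ^ β) = p ^ α` it leaves a
single nonzero entry.
-/

open Finset

def CarryFreeAdd (p a b : ℕ) : Prop :=
  ∀ d, a / p ^ d % p + b / p ^ d % p ≤ p - 1

namespace CarryFreeAdd

variable {p a b : ℕ}

theorem zero_left (hp : 0 < p) : CarryFreeAdd p 0 b := fun d => by
  simpa using Nat.le_sub_one_of_lt (Nat.mod_lt (b / p ^ d) hp)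

theorem zero_right (hp : 0 < p) : CarryFreeAdd p a 0 := fun d => by
  simpa using Nat.le_sub_one_of_lt (Nat.mod_lt (a / p ^ d) hp)

theorem mod_pow_add_mod_pow_lt (hp : 0 < p) (h : CarryFreeAdd p a b) (d : ℕ) :
    a % p ^ d + b % p ^ d < p ^ d := by
  induction d with
  | zero => simp [Nat.mod_one]
  | succ d ih =>
    have hdigits : p ^ d * (a / p ^ d % p) + p ^ d * (b / p ^ d % p) ≤ p ^ d * (p - 1) := by
      rw [← Nat.mul_add]
      exact Nat.mul_le_mul_left _ (h d)
    have hpow : p ^ (d + 1) = p ^ d * (p - 1) + p ^ d := by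
      rw [pow_succ, ← Nat.mul_succ, Nat.succ_eq_add_one, Nat.sub_add_cancel hp]
    rw [Nat.mod_pow_succ, Nat.mod_pow_succ]
    omega

theorem eq_zero_or_eq_pow {n : ℕ} (hp : p.Prime) (h : CarryFreeAdd p a b) (hab : a + b = p ^ n) :
    a = 0 ∨ a = p ^ n := by
  have := Fact.mk hp
  by_contra! ha
  have hb : b = p ^ n - a := by omega
  have hdvd : p ∣ (p ^ n).choose a := hp.dvd_choose_pow ha.1 ha.2
  have hno_carry : padicValNat p ((p ^ n).choose a) = 0 := by
    rw [padicValNat_choose (k := a) (b := n + 1) (by omega) (by rw [Nat.log_pow hp.one_lt]; omega),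
      card_eq_zero, filter_eq_empty_iff]
    intro i _
    rw [← hb]
    exact not_le.mpr (h.mod_pow_add_mod_pow_lt hp.pos i)
  have hchoose : (p ^ n).choose a ≠ 0 := (Nat.choose_pos (by omega)).ne'
  have := one_le_padicValNat_of_dvd hchoose hdvd
  omega

end CarryFreeAdd

theorem Fin.sum_val_mul_eq_of_forall_ne {n : ℕ} {m : Fin n → ℕ} (i : Fin n)
    (h : ∀ j, j ≠ i → m j = 0) : ∑ j : Fin n, (j : ℕ) * m j = i * m i :=
  Fintype.sum_eq_single i fun j hj => by rw [h j hj, mul_zero]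

section Concentration

variable {p α β : ℕ}

theorem eq_zero_or_eq_last_of_carryFreeAdd (hp : p.Prime) {j : Fin (p ^ β + 1)}
    (hj : CarryFreeAdd p j (p ^ β - j)) : j = 0 ∨ j = Fin.last _ := by
  rcases hj.eq_zero_or_eq_pow hp (Nat.add_sub_of_le (Nat.lt_succ_iff.mp j.isLt)) with h | h
  · exact Or.inl (Fin.ext h)
  · exact Or.inr (Fin.ext h)

theorem exists_eq_pow_of_carryFree (hp : p.Prime) (m : Fin (p ^ β + 1) → ℕ)
    (hsum : ∑ j, m j = p ^ α) (hcf : ∀ d, ∑ j, m j / p ^ d % p ≤ p - 1)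
    (hsupp : ∀ j, m j ≠ 0 → CarryFreeAdd p j (p ^ β - j)) :
    ∃ i : Fin (p ^ β + 1), ((i : ℕ) = 0 ∨ (i : ℕ) = p ^ β) ∧
      m i = p ^ α ∧ ∀ j, j ≠ i → m j = 0 := by
  have hzero : ∀ j, j ≠ 0 → j ≠ Fin.last _ → m j = 0 := fun j h0 hlast => by
    by_contra hj
    exact (eq_zero_or_eq_last_of_carryFreeAdd hp (hsupp j hj)).elim h0 hlast
  have h0last : (0 : Fin (p ^ β + 1)) ≠ Fin.last _ :=
    fun h => (pow_pos hp.pos β).ne (congrArg Fin.val h)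
  have hpair (f : ℕ → ℕ) (hf : f 0 = 0) : ∑ j, f (m j) = f (m 0) + f (m (Fin.last _)) :=
    Fintype.sum_eq_add _ _ h0last fun j hj => by rw [hzero j hj.1 hj.2, hf]
  have hadd : m 0 + m (Fin.last _) = p ^ α := by
    have h := hpair id rfl
    simp only [id] at h
    rw [← hsum, h]
  have hcf_pair : CarryFreeAdd p (m 0) (m (Fin.last _)) := fun d => by
    rw [← hpair (fun x => x / p ^ d % p) (by simp)]
    exact hcf d
  rcases hcf_pair.eq_zero_or_eq_pow hp hadd with h | h
  · refine ⟨Fin.last _, Or.inr rfl, by omega, fun j hj => ?_⟩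
    by_cases hj0 : j = 0
    · rw [hj0, h]
    · exact hzero j hj0 hj
  · refine ⟨0, Or.inl rfl, h, fun j hj => ?_⟩
    by_cases hjlast : j = Fin.last _
    · rw [hjlast]; omega
    · exact hzero j hj hjlast

theorem carryFree_pi_single (hp : 0 < p) {i : Fin (p ^ β + 1)} (hi : (i : ℕ) = 0 ∨ (i : ℕ) = p ^ β)
    (c : ℕ) :
    (∀ d, ∑ j, (Pi.single i c : Fin (p ^ β + 1) → ℕ) j / p ^ d % p ≤ p - 1) ∧
      ∀ j, (Pi.single i c : Fin (p ^ β + 1) → ℕ) j ≠ 0 → CarryFreeAdd p j (p ^ β - j) := by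
  refine ⟨fun d => ?_, fun j hj => ?_⟩
  · rw [Fintype.sum_eq_single i fun j hj => by simp [hj], Pi.single_eq_same]
    exact Nat.le_sub_one_of_lt (Nat.mod_lt _ hp)
  · obtain rfl : j = i := by
      by_contra h
      exact hj (Pi.single_eq_of_ne h _)
    rcases hi with hi | hi
    · rw [hi]
      exact CarryFreeAdd.zero_left hp
    · rw [hi, Nat.sub_self]
      exact CarryFreeAdd.zero_right hp

end Concentration

theorem stmt4_general (p α β : ℕ) (hp : p.Prime) :
    (∀ m : Fin (p ^ β + 1) → ℕ,
      (∑ j, m j = p ^ α) →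
      (∀ d : ℕ, ∑ j, (m j / p ^ d % p) ≤ p - 1) →
      (∀ j : Fin (p ^ β + 1), m j ≠ 0 →
        ∀ d : ℕ, (j : ℕ) / p ^ d % p + (p ^ β - (j : ℕ)) / p ^ d % p ≤ p - 1) →
      ∃ i : Fin (p ^ β + 1), ((i : ℕ) = 0 ∨ (i : ℕ) = p ^ β) ∧
        m i = p ^ α ∧ ∀ j, j ≠ i → m j = 0)
    ∧
    {x : ℕ | ∃ m : Fin (p ^ β + 1) → ℕ,
        (∑ j, m j = p ^ α) ∧
        (∀ d : ℕ, ∑ j, (m j / p ^ d % p) ≤ p - 1) ∧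
        (∀ j : Fin (p ^ β + 1), m j ≠ 0 →
          ∀ d : ℕ, (j : ℕ) / p ^ d % p + (p ^ β - (j : ℕ)) / p ^ d % p ≤ p - 1) ∧
        x = ∑ j : Fin (p ^ β + 1), (j : ℕ) * m j}
      = {0, p ^ (α + β)} := by
  refine ⟨fun m => exists_eq_pow_of_carryFree hp m, ?_⟩
  ext x
  constructor
  · rintro ⟨m, hsum, hcf, hsupp, rfl⟩
    obtain ⟨i, hi, hmi, hrest⟩ := exists_eq_pow_of_carryFree hp m hsum hcf hsupp
    rw [Fin.sum_val_mul_eq_of_forall_ne i hrest, hmi]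
    rcases hi with hi | hi
    · simp [hi]
    · simp [hi, pow_add, mul_comm]
  · rintro (rfl | rfl)
    · obtain ⟨hcf, hsupp⟩ := carryFree_pi_single hp.pos (i := 0) (Or.inl rfl) (p ^ α)
      refine ⟨_, Fintype.sum_pi_single' _ _, hcf, hsupp, ?_⟩
      rw [Fin.sum_val_mul_eq_of_forall_ne 0 fun j hj => Pi.single_eq_of_ne hj _]
      simp
    · obtain ⟨hcf, hsupp⟩ := carryFree_pi_single hp.pos (i := Fin.last _) (Or.inr rfl) (p ^ α)
      refine ⟨_, Fintype.sum_pi_single' _ _, hcf, hsupp, ?_⟩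
      rw [Fin.sum_val_mul_eq_of_forall_ne _ fun j hj => Pi.single_eq_of_ne hj _]
      simp [pow_add, mul_comm]

/-- if `m_0, …, m_{p^β}` are naturals summing to `p^α`, the sum is
carry-free in base `p`, and every index `j` with `m_j ≠ 0` is a carry-free summand
of `p^β`, then all the weight is concentrated at a single index `i ∈ {0, p^β}`,
with `m_i = p^α`; consequently the set of possible values of `Σ_j j·m_j` is
exactly `{0, p^(α+β)}`. -/
theorem stmt4 (p α β : ℕ) (hp : p.Prime) (hβ : 1 ≤ β) :
    (∀ m : Fin (p ^ β + 1) → ℕ,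
      (∑ j, m j = p ^ α) →
      (∀ d : ℕ, ∑ j, (m j / p ^ d % p) ≤ p - 1) →
      (∀ j : Fin (p ^ β + 1), m j ≠ 0 →
        ∀ d : ℕ, (j : ℕ) / p ^ d % p + (p ^ β - (j : ℕ)) / p ^ d % p ≤ p - 1) →
      ∃ i : Fin (p ^ β + 1), ((i : ℕ) = 0 ∨ (i : ℕ) = p ^ β) ∧
        m i = p ^ α ∧ ∀ j, j ≠ i → m j = 0)
    ∧
    {x : ℕ | ∃ m : Fin (p ^ β + 1) → ℕ,
        (∑ j, m j = p ^ α) ∧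
        (∀ d : ℕ, ∑ j, (m j / p ^ d % p) ≤ p - 1) ∧
        (∀ j : Fin (p ^ β + 1), m j ≠ 0 →
          ∀ d : ℕ, (j : ℕ) / p ^ d % p + (p ^ β - (j : ℕ)) / p ^ d % p ≤ p - 1) ∧
        x = ∑ j : Fin (p ^ β + 1), (j : ℕ) * m j}
      = {0, p ^ (α + β)} :=
  stmt4_general p α β hp
end

section
/- Let K be a field, E = ⟨X, Y⟩ the natural 2-dimensional representation of SL_2(K), and l ≥ 0. Suppose every a with 0 ≤ a ≤ l is a carry-free summand of l in base p = char K (automatic if char K = 0). Then the composition of the inclusion Sym_l E ↪ E^{⊗l} with the quotient E^{⊗l} ↠ Sym^l E, which sends the symmetrized tensor (X^{⊗(l-a)} ⊗ Y^{⊗a})_sym to C(l,a)·X^{l-a}Y^a, is an isomorphism of SL_2(K)-representations Sym_l E ≅ Sym^l E. -/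
open scoped TensorProduct
open MvPolynomial

noncomputable section

variable (K : Type*) [Field K]

/-- The basis vector `X = (1,0)` of the natural module `E = K²` of `SL_2(K)`. -/
def Xv : Fin 2 → K := Pi.single 0 1

/-- The basis vector `Y = (0,1)` of `E = K²`. -/
def Yv : Fin 2 → K := Pi.single 1 1

/-- The symmetrized tensor `(X^{⊗(l-a)} ⊗ Y^{⊗a})_sym ∈ E^{⊗l}`: the sum of all
pure tensors with `l - a` factors `X` and `a` factors `Y`; these form the
canonical basis of `Sym_l E` as `a` ranges over `0,…,l`. -/
def symT (l a : ℕ) : ⨂[K]^l (Fin 2 → K) :=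
  ∑ s ∈ Finset.univ.powersetCard a,
    PiTensorProduct.tprod K (fun t : Fin l => if t ∈ s then Yv K else Xv K)

/-- The invariant symmetric power `Sym_l E`: `S_l`-invariants of `E^{⊗l}` under
place permutation. -/
def SymInv (W : Type*) [AddCommGroup W] [Module K W] (l : ℕ) :
    Submodule K (⨂[K]^l W) :=
  ⨅ σ : Equiv.Perm (Fin l),
    LinearMap.eqLocus (PiTensorProduct.reindex K (fun _ => W) σ).toLinearMap LinearMap.id

/-- The inclusion of `E` into linear polynomials: `v ↦ v₀·x₀ + v₁·x₁`. -/
def toPoly : (Fin 2 → K) →ₗ[K] MvPolynomial (Fin 2) K :=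
  (LinearMap.proj 0).smulRight (X 0) + (LinearMap.proj 1).smulRight (X 1)

/-- The composite `E^{⊗l} ↠ Sym^l E` of the quotient map, with `Sym^l E`
realised as the degree-`l` homogeneous polynomials in `x₀, x₁`:
`v₁ ⊗ ⋯ ⊗ v_l ↦ ∏ⱼ (vⱼ₀ x₀ + vⱼ₁ x₁)`. -/
def quotMap (l : ℕ) : (⨂[K]^l (Fin 2 → K)) →ₗ[K] MvPolynomial (Fin 2) K :=
  PiTensorProduct.lift
    ((MultilinearMap.mkPiAlgebraFin K l (MvPolynomial (Fin 2) K)).compLinearMap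
      (fun _ => toPoly K))

/-- The diagonal action of `g ∈ SL_2(K)` on `E^{⊗l}`. -/
def Tmap (l : ℕ) (g : Matrix.SpecialLinearGroup (Fin 2) K) :
    (⨂[K]^l (Fin 2 → K)) →ₗ[K] ⨂[K]^l (Fin 2 → K) :=
  PiTensorProduct.map
    (fun _ : Fin l => Matrix.mulVecLin (↑g : Matrix (Fin 2) (Fin 2) K))

/-- The action of `g ∈ SL_2(K)` on polynomials (the substitution matching the
action on `E`, so that `quotMap` is equivariant). -/
def polyAct (g : Matrix.SpecialLinearGroup (Fin 2) K) :
    MvPolynomial (Fin 2) K →ₐ[K] MvPolynomial (Fin 2) K :=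
  aeval (fun j : Fin 2 => ∑ i : Fin 2, (↑g : Matrix (Fin 2) (Fin 2) K) i j • X i)


/-!
The tensors `e_s = ⊗ₜ (Y if t ∈ s else X)`, `s ⊆ Fin l`, form a basis of `E^{⊗l}` on which
`S_l` acts by permuting the subsets `s`. As `S_l` is transitive on subsets of a given size, the
coordinates of an invariant tensor depend only on `|s|`. The quotient map sends `e_s` to
`X^{l-|s|} Y^{|s|}`, so the coefficient of `X^{l-a} Y^a` in the image of an invariant tensor is
`C(l,a)` times its coordinate at any `s` with `|s| = a`. Invertibility of the binomial
coefficients thus gives injectivity, and surjectivity since `X^{l-a} Y^a` is the image of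
`C(l,a)⁻¹ (X^{⊗(l-a)} ⊗ Y^{⊗a})_sym`.
-/

open scoped Pointwise
open Finset PiTensorProduct

def Finset.equivFunFinTwo (ι : Type*) [DecidableEq ι] [Fintype ι] :
    Finset ι ≃ (ι → Fin 2) where
  toFun s i := if i ∈ s then 1 else 0
  invFun f := {i | f i = 1}
  left_inv s := by ext i; by_cases h : i ∈ s <;> simp [h]
  right_inv f := by funext i; rcases Fin.exists_fin_two.mp ⟨f i, rfl⟩ with h | h <;> simp [h]

theorem Finset.exists_perm_smul_eq_of_card_eq {α : Type*} [Fintype α] [DecidableEq α]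
    {s t : Finset α} (h : s.card = t.card) : ∃ σ : Equiv.Perm α, σ • s = t := by
  obtain ⟨σ, hσ⟩ := (Set.powersetCard.isPretransitive (α := α) (n := t.card)).exists_smul_eq
    ⟨s, h⟩ ⟨t, rfl⟩
  exact ⟨σ, congrArg Subtype.val hσ⟩

theorem MvPolynomial.X_zero_pow_mul_X_one_pow {R : Type*} [CommSemiring R] (i j : ℕ) :
    (X 0 ^ i * X 1 ^ j : MvPolynomial (Fin 2) R) =
      monomial (Finsupp.single 0 i + Finsupp.single 1 j) 1 := by
  rw [X_pow_eq_monomial, X_pow_eq_monomial, monomial_mul, one_mul]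

section

variable {K} {l : ℕ}

variable (K l) in
def tensorBasis : Module.Basis (Finset (Fin l)) K (⨂[K]^l (Fin 2 → K)) :=
  (Basis.piTensorProduct fun _ => Pi.basisFun K (Fin 2)).reindex
    (Finset.equivFunFinTwo (Fin l)).symm

theorem tensorBasis_apply (s : Finset (Fin l)) :
    tensorBasis K l s = tprod K (fun t => if t ∈ s then Yv K else Xv K) := by
  simp only [tensorBasis, Module.Basis.reindex_apply, Equiv.symm_symm,
    Basis.piTensorProduct_apply, Pi.basisFun_apply]
  congr 1
  funext t
  by_cases h : t ∈ s <;> simp [Finset.equivFunFinTwo, h, Xv, Yv]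

theorem symT_eq_sum_tensorBasis (a : ℕ) :
    symT K l a = ∑ s ∈ univ.powersetCard a, tensorBasis K l s := by
  simp only [symT, tensorBasis_apply]

theorem reindex_tensorBasis (σ : Equiv.Perm (Fin l)) (s : Finset (Fin l)) :
    reindex K (fun _ => Fin 2 → K) σ (tensorBasis K l s) = tensorBasis K l (σ • s) := by
  simp only [tensorBasis_apply, reindex_tprod, ← Finset.inv_smul_mem_iff]
  rfl

theorem tensorBasis_repr_reindex (σ : Equiv.Perm (Fin l)) (x : ⨂[K]^l (Fin 2 → K))
    (s : Finset (Fin l)) :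
    (tensorBasis K l).repr (reindex K (fun _ => Fin 2 → K) σ x) (σ • s) =
      (tensorBasis K l).repr x s := by
  suffices ((tensorBasis K l).coord (σ • s)).comp
      (reindex K (fun _ => Fin 2 → K) σ).toLinearMap = (tensorBasis K l).coord s from
    LinearMap.congr_fun this x
  refine (tensorBasis K l).ext fun s' => ?_
  simp [reindex_tensorBasis, Finsupp.single_apply]

theorem mem_symInv_iff (x : ⨂[K]^l (Fin 2 → K)) :
    x ∈ SymInv K (Fin 2 → K) l ↔
      ∀ σ : Equiv.Perm (Fin l), reindex K (fun _ => Fin 2 → K) σ x = x := by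
  simp [SymInv, Submodule.mem_iInf, LinearMap.mem_eqLocus]

theorem symT_mem_symInv (a : ℕ) : symT K l a ∈ SymInv K (Fin 2 → K) l := by
  refine (mem_symInv_iff _).2 fun σ => ?_
  simp only [symT_eq_sum_tensorBasis, map_sum, reindex_tensorBasis]
  exact Finset.sum_equiv (MulAction.toPerm σ) (by simp) (fun _ _ => rfl)

theorem tensorBasis_repr_eq_of_card_eq {x : ⨂[K]^l (Fin 2 → K)}
    (hx : x ∈ SymInv K (Fin 2 → K) l) {s t : Finset (Fin l)} (h : s.card = t.card) :
    (tensorBasis K l).repr x s = (tensorBasis K l).repr x t := by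
  obtain ⟨σ, rfl⟩ := Finset.exists_perm_smul_eq_of_card_eq h
  rw [← tensorBasis_repr_reindex σ x s, (mem_symInv_iff x).1 hx σ]

theorem quotMap_tprod (v : Fin l → Fin 2 → K) :
    quotMap K l (tprod K v) = ∏ t, toPoly K (v t) := by
  simp [quotMap, MultilinearMap.mkPiAlgebraFin_apply, List.prod_ofFn]

theorem quotMap_tensorBasis (s : Finset (Fin l)) :
    quotMap K l (tensorBasis K l s) = X 0 ^ (l - s.card) * X 1 ^ s.card := by
  have hX : toPoly K (Xv K) = X 0 := by simp [toPoly, Xv]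
  have hY : toPoly K (Yv K) = X 1 := by simp [toPoly, Yv]
  rw [tensorBasis_apply, quotMap_tprod, prod_congr rfl fun t _ => apply_ite (toPoly K) _ _ _,
    prod_ite, hX, hY, prod_const, prod_const, mul_comm, filter_mem_eq_inter, univ_inter,
    filter_not, filter_mem_eq_inter, univ_inter, card_univ_sdiff, Fintype.card_fin]

theorem quotMap_symT (a : ℕ) :
    quotMap K l (symT K l a) =
      (l.choose a : K) • ((X 0 : MvPolynomial (Fin 2) K) ^ (l - a) * X 1 ^ a) := by
  rw [symT_eq_sum_tensorBasis, map_sum,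
    sum_congr rfl fun s hs => by rw [quotMap_tensorBasis, (mem_powersetCard.1 hs).2],
    sum_const, card_powersetCard, card_univ, Fintype.card_fin, Nat.cast_smul_eq_nsmul]

theorem quotMap_mem_homogeneousSubmodule (x : ⨂[K]^l (Fin 2 → K)) :
    quotMap K l x ∈ homogeneousSubmodule (Fin 2) K l := by
  rw [← (tensorBasis K l).sum_repr x, map_sum]
  refine Submodule.sum_mem _ fun s _ => ?_
  have hs : l - s.card + s.card = l := Nat.sub_add_cancel (by simpa using card_le_univ s)
  rw [map_smul]
  refine Submodule.smul_mem _ _ ?_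
  rw [mem_homogeneousSubmodule, quotMap_tensorBasis]
  simpa [hs] using ((isHomogeneous_X K (0 : Fin 2)).pow (l - s.card)).mul
    ((isHomogeneous_X K (1 : Fin 2)).pow s.card)

theorem coeff_quotMap (x : ⨂[K]^l (Fin 2 → K)) (a : ℕ) :
    coeff (Finsupp.single 0 (l - a) + Finsupp.single 1 a) (quotMap K l x) =
      ∑ s ∈ univ.powersetCard a, (tensorBasis K l).repr x s := by
  suffices (lcoeff K (Finsupp.single 0 (l - a) + Finsupp.single 1 a)).comp (quotMap K l) =
      ∑ s ∈ univ.powersetCard a, (tensorBasis K l).coord s by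
    simpa using LinearMap.congr_fun this x
  refine (tensorBasis K l).ext fun s' => ?_
  simp only [LinearMap.comp_apply, lcoeff_apply, quotMap_tensorBasis, X_zero_pow_mul_X_one_pow,
    coeff_monomial, LinearMap.sum_apply, Module.Basis.coord_apply,
    Module.Basis.repr_self, Finsupp.single_apply, sum_ite_eq, mem_powersetCard, subset_univ,
    true_and]
  exact if_congr ⟨fun he => by simpa using DFunLike.congr_fun he 1, fun h => by rw [h]⟩ rfl rfl

theorem quotMap_injOn_symInv (hchoose : ∀ a ≤ l, (l.choose a : K) ≠ 0) :
    Set.InjOn (quotMap K l) (SymInv K (Fin 2 → K) l) := by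
  refine (Set.injOn_iff_map_eq_zero _ _).2 fun x hx hx0 =>
    (tensorBasis K l).ext_elem fun s => ?_
  have hs : s.card ≤ l := by simpa using card_le_univ s
  have hcoeff := coeff_quotMap x s.card
  rw [hx0, coeff_zero, sum_congr rfl fun t ht =>
      tensorBasis_repr_eq_of_card_eq hx (mem_powersetCard.1 ht).2,
    sum_const, card_powersetCard, card_univ, Fintype.card_fin, nsmul_eq_mul] at hcoeff
  simpa [hchoose _ hs] using hcoeff.symm

theorem quotMap_surjOn_symInv (hchoose : ∀ a ≤ l, (l.choose a : K) ≠ 0) :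
    Set.SurjOn (quotMap K l) (SymInv K (Fin 2 → K) l) (homogeneousSubmodule (Fin 2) K l) := by
  suffices homogeneousSubmodule (Fin 2) K l ≤ (SymInv K (Fin 2 → K) l).map (quotMap K l) from
    fun p hp => by simpa using this hp
  rw [homogeneousSubmodule_eq_finsupp_supported, AddMonoidAlgebra.supported_eq_span_single,
    Submodule.span_le]
  rintro _ ⟨d, hdeg, rfl⟩
  have hd : d 0 + d 1 = l := by simpa [Finsupp.degree_eq_sum] using hdeg
  have hmono : AddMonoidAlgebra.single d 1 =
      (X 0 ^ (l - d 1) * X 1 ^ d 1 : MvPolynomial (Fin 2) K) := by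
    rw [X_zero_pow_mul_X_one_pow, ← hd, Nat.add_sub_cancel]
    congr
    ext i
    fin_cases i <;> simp
  refine ⟨(l.choose (d 1) : K)⁻¹ • symT K l (d 1),
    Submodule.smul_mem _ _ (symT_mem_symInv _), ?_⟩
  rw [map_smul, quotMap_symT, inv_smul_smul₀ (hchoose _ (by omega))]
  exact hmono.symm

theorem toPoly_mulVecLin (g : Matrix (Fin 2) (Fin 2) K) (v : Fin 2 → K) :
    toPoly K (g.mulVecLin v) =
      aeval (fun j : Fin 2 => ∑ i : Fin 2, g i j • X i) (toPoly K v) := by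
  simp only [toPoly, LinearMap.add_apply, LinearMap.smulRight_apply, LinearMap.proj_apply,
    Matrix.mulVecLin_apply, Matrix.mulVec, dotProduct, Fin.sum_univ_two, map_add, map_smul,
    aeval_X, smul_add, add_smul, smul_smul]
  module

theorem quotMap_Tmap (g : Matrix.SpecialLinearGroup (Fin 2) K) (x : ⨂[K]^l (Fin 2 → K)) :
    quotMap K l (Tmap K l g x) = polyAct K g (quotMap K l x) := by
  induction x using PiTensorProduct.induction_on with
  | smul_tprod r v =>
    simp only [map_smul, Tmap, map_tprod, quotMap_tprod, map_prod, polyAct, toPoly_mulVecLin]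
  | add x y hx hy => simp only [map_add, hx, hy]

end

/-- if `C(l,a) ≠ 0` in `K` for all `0 ≤ a ≤ l` (i.e. every `a ≤ l`
is a carry-free summand of `l` in base `char K`; automatic in characteristic 0),
then the composition `Sym_l E ↪ E^{⊗l} ↠ Sym^l E`, which sends
`(X^{⊗(l-a)} ⊗ Y^{⊗a})_sym ↦ C(l,a)·X^{l-a}Y^a`, is an isomorphism of
`SL_2(K)`-representations `Sym_l E ≅ Sym^l E` (realising `Sym^l E` as the
homogeneous polynomials of degree `l`). -/
theorem stmt10 (l : ℕ) (hchoose : ∀ a ≤ l, ((l.choose a : K)) ≠ 0) :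
    (∀ a ≤ l, quotMap K l (symT K l a)
        = (l.choose a : K) • ((X 0 : MvPolynomial (Fin 2) K) ^ (l - a) * X 1 ^ a)) ∧
    Set.BijOn (quotMap K l) (SymInv K (Fin 2 → K) l : Set (⨂[K]^l (Fin 2 → K)))
      ((homogeneousSubmodule (Fin 2) K l : Submodule K (MvPolynomial (Fin 2) K)) : Set (MvPolynomial (Fin 2) K)) ∧
    (∀ (g : Matrix.SpecialLinearGroup (Fin 2) K) (x : ⨂[K]^l (Fin 2 → K)),
      quotMap K l (Tmap K l g x) = polyAct K g (quotMap K l x)) :=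
  ⟨fun a _ => quotMap_symT a,
    ⟨fun x _ => quotMap_mem_homogeneousSubmodule x, quotMap_injOn_symInv hchoose,
      quotMap_surjOn_symInv hchoose⟩,
    quotMap_Tmap⟩

end
end

section
/- Let p be a prime, l, m ≥ 0. The set D = { Σ_{j=0}^l j·m_j : m_0,…,m_l ∈ ℕ, m_0 + ⋯ + m_l = m, and the sum m_0 + ⋯ + m_l is carry-free in base p, and every j with m_j ≠ 0 satisfies C(l,j) ≢ 0 mod p }. For m = p and l = p^ε with ε ≥ 1, D = {0, p^{ε+1}}. -/
/-!
Reading digit `0` of a carry-free composition of `p` shows that a single part already carries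
all the weight, since otherwise the parts are below `p` and their last digits add up to `p`.
So the composition is `p` copies of one index `c`, contributing `c * p`; by Lucas, `p` divides
`C(p^ε, c)` unless `c ∈ {0, p^ε}`.
-/

open Finset

def CarryFree {ι : Type*} [Fintype ι] (p : ℕ) (m : ι → ℕ) : Prop :=
  ∀ d : ℕ, ∑ j, (m j / p ^ d % p) ≤ p - 1

section CarryFree

variable {ι : Type*} [Fintype ι] [DecidableEq ι] {p : ℕ}

theorem carryFree_single (hp : 0 < p) (c : ι) (a : ℕ) : CarryFree p (Pi.single c a) := by
  intro d
  have hdigit : ∀ j, (Pi.single c a : ι → ℕ) j / p ^ d % p =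
      (Pi.single c (a / p ^ d % p) : ι → ℕ) j := by
    intro j
    by_cases hj : j = c
    · subst hj; simp
    · simp [hj]
  simp only [hdigit, Fintype.sum_pi_single']
  have := Nat.mod_lt (a / p ^ d) hp
  omega

theorem exists_eq_single_of_sum_eq_of_carryFree (hp : 0 < p) {m : ι → ℕ}
    (hsum : ∑ j, m j = p) (hcf : CarryFree p m) : ∃ c, m = Pi.single c p := by
  obtain ⟨c, hc⟩ : ∃ c, p ≤ m c := by
    by_contra! hlt
    have hdigits : ∑ j, (m j / p ^ 0 % p) = p := by
      simpa [Nat.mod_eq_of_lt (hlt _)] using hsum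
    have := hcf 0
    omega
  have hmc : m c = p := le_antisymm (hsum ▸ single_le_sum (fun j _ => Nat.zero_le _)
    (mem_univ c)) hc
  have hrest : ∑ j ∈ univ.erase c, m j = 0 := by
    have := add_sum_erase univ m (mem_univ c)
    omega
  refine ⟨c, funext fun j => ?_⟩
  by_cases hj : j = c
  · subst hj; simpa using hmc
  · simpa [hj] using (sum_eq_zero_iff.mp hrest) j (mem_erase.mpr ⟨hj, mem_univ j⟩)

end CarryFree

theorem Nat.Prime.choose_pow_mod_ne_zero_iff {p k j : ℕ} (hp : p.Prime) (hj : j ≤ p ^ k) :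
    (p ^ k).choose j % p ≠ 0 ↔ j = 0 ∨ j = p ^ k := by
  constructor
  · intro h
    by_contra! hne
    exact h (Nat.mod_eq_zero_of_dvd (hp.dvd_choose_pow hne.1 hne.2))
  · rintro (rfl | rfl) <;> simp [Nat.mod_eq_of_lt hp.one_lt]

theorem exists_carryFree_composition_iff {n p x : ℕ} (hp : 0 < p) :
    (∃ m : Fin (n + 1) → ℕ, (∑ j, m j = p) ∧ CarryFree p m ∧
        (∀ j : Fin (n + 1), m j ≠ 0 → n.choose j % p ≠ 0) ∧
        x = ∑ j : Fin (n + 1), (j : ℕ) * m j) ↔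
      ∃ c : Fin (n + 1), n.choose c % p ≠ 0 ∧ x = c * p := by
  have hweight : ∀ c : Fin (n + 1),
      ∑ j : Fin (n + 1), (j : ℕ) * (Pi.single c p : Fin (n + 1) → ℕ) j = c * p := by
    intro c
    simp [Pi.single_apply, mul_ite]
  constructor
  · rintro ⟨m, hsum, hcf, hsupp, rfl⟩
    obtain ⟨c, rfl⟩ := exists_eq_single_of_sum_eq_of_carryFree hp hsum hcf
    exact ⟨c, hsupp c (by simpa using hp.ne'), hweight c⟩
  · rintro ⟨c, hc, rfl⟩
    refine ⟨Pi.single c p, by simp, carryFree_single hp c p, fun j hj => ?_, (hweight c).symm⟩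
    by_cases hjc : j = c
    · exact hjc ▸ hc
    · simp [hjc] at hj

theorem stmt17_general (p ε : ℕ) (hp : p.Prime) :
    {x : ℕ | ∃ m : Fin (p ^ ε + 1) → ℕ,
        (∑ j, m j = p) ∧
        (∀ d : ℕ, ∑ j, (m j / p ^ d % p) ≤ p - 1) ∧
        (∀ j : Fin (p ^ ε + 1), m j ≠ 0 → Nat.choose (p ^ ε) (j : ℕ) % p ≠ 0) ∧
        x = ∑ j : Fin (p ^ ε + 1), (j : ℕ) * m j}
      = {0, p ^ (ε + 1)} := by
  ext x
  refine (exists_carryFree_composition_iff hp.pos).trans ⟨?_, ?_⟩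
  · rintro ⟨c, hc, rfl⟩
    rcases (hp.choose_pow_mod_ne_zero_iff c.is_le).mp hc with hc0 | hcn
    · simp [hc0]
    · simp [hcn, pow_succ]
  · rintro (rfl | rfl)
    · exact ⟨0, (hp.choose_pow_mod_ne_zero_iff (Nat.zero_le _)).mpr (.inl rfl), by simp⟩
    · exact ⟨Fin.last _, (hp.choose_pow_mod_ne_zero_iff le_rfl).mpr (.inr rfl),
        by simp [pow_succ]⟩

/-- for `m = p` and `l = p^ε` (`ε ≥ 1`), the defect set
`D = { Σ_j j·m_j : Σ m_j = p, the sum m_0 + ⋯ + m_l is carry-free in base p,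
and C(l,j) ≢ 0 mod p whenever m_j ≠ 0 }` equals `{0, p^{ε+1}}`. -/
theorem stmt17 (p ε : ℕ) (hp : p.Prime) (hε : 1 ≤ ε) :
    {x : ℕ | ∃ m : Fin (p ^ ε + 1) → ℕ,
        (∑ j, m j = p) ∧
        (∀ d : ℕ, ∑ j, (m j / p ^ d % p) ≤ p - 1) ∧
        (∀ j : Fin (p ^ ε + 1), m j ≠ 0 → Nat.choose (p ^ ε) (j : ℕ) % p ≠ 0) ∧
        x = ∑ j : Fin (p ^ ε + 1), (j : ℕ) * m j}
      = {0, p ^ (ε + 1)} :=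
  stmt17_general p ε hp
end

section
/- Let p be a prime, K a field of characteristic p with |K| > 1 + 2·2^{ε+1} where p = 2 and ε > 1 (so K = 𝔽_{2^f} large enough). In Sym^{2^ε} Sym^2 E, the K-span of the images under all M_γ (γ ∈ K) of the 0-weight vectors (X^2)^{2^{ε-1}-a}·(XY)^{2a}·(Y^2)^{2^{ε-1}-a} contains only weight vectors of weights divisible by 4. -/
open MvPolynomial

/-! In characteristic 2 the substitution `M_γ` sends `u^m v^{2a} w^m` to
`((u + γ²w) w)^m (v² + γ²w²)^a`, using `(v + γw)² = v² + γ²w²`. Every factor is a sum of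
monomials `u^i v^j w^k` with `i + k` even, hence so is the product and every element of the
span. -/

/-- The weight `2(i - k)` of `u^i v^j w^k` is divisible by `4` iff `i + k` is even, i.e. iff
the `ZMod 2`-valued weight with respect to `(1, 0, 1)` vanishes. -/
def parityWeight : Fin 3 → ZMod 2 := ![1, 0, 1]

lemma weight_parityWeight_eq_zero_iff (μ : Fin 3 →₀ ℕ) :
    Finsupp.weight parityWeight μ = 0 ↔ Even (μ 0 + μ 2) := by
  rw [← ZMod.natCast_eq_zero_iff_even, Finsupp.weight_apply,
    Finsupp.sum_fintype _ _ (by simp), Fin.sum_univ_three]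
  simp [parityWeight]

section Shear

variable {R : Type*} [CommSemiring R]

noncomputable def shear (γ : R) : Fin 3 → MvPolynomial (Fin 3) R :=
  ![X 0 + γ ^ 2 • X 2, X 1 + γ • X 2, X 2]

lemma aeval_shear_monomial (γ : R) (m a : ℕ) :
    aeval (shear γ) ((X 0 : MvPolynomial (Fin 3) R) ^ m * X 1 ^ (2 * a) * X 2 ^ m)
      = ((X 0 + γ ^ 2 • X 2) * X 2) ^ m * ((X 1 + γ • X 2) ^ 2) ^ a := by
  simp only [shear, map_mul, map_pow, aeval_X, Matrix.cons_val_zero, Matrix.cons_val_one,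
    Matrix.cons_val_two, Matrix.head_cons, Matrix.tail_cons]
  rw [mul_pow, ← pow_mul, mul_comm 2 a]
  ring

variable [CharP R 2]

lemma isWeightedHomogeneous_aeval_shear_monomial (γ : R) (m a : ℕ) :
    (aeval (shear γ) ((X 0 : MvPolynomial (Fin 3) R) ^ m * X 1 ^ (2 * a) * X 2 ^ m)
      ).IsWeightedHomogeneous parityWeight 0 := by
  have hX (i : Fin 3) : (X i : MvPolynomial (Fin 3) R).IsWeightedHomogeneous parityWeight
      (parityWeight i) := isWeightedHomogeneous_X R _ i
  have hsmul {n : ZMod 2} {p : MvPolynomial (Fin 3) R} (c : R)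
      (hp : p.IsWeightedHomogeneous parityWeight n) :
      (c • p).IsWeightedHomogeneous parityWeight n := by
    simpa [smul_eq_C_mul] using hp.C_mul c
  have hu : ((X 0 + γ ^ 2 • X 2) * X 2 : MvPolynomial (Fin 3) R).IsWeightedHomogeneous
      parityWeight 0 := ((hX 0).add (hsmul _ (hX 2))).mul (hX 2)
  have hv : ((X 1 + γ • X 2) ^ 2 : MvPolynomial (Fin 3) R).IsWeightedHomogeneous
      parityWeight 0 := by
    rw [add_pow_char, smul_pow]
    exact ((hX 1).pow 2).add (hsmul _ ((hX 2).pow 2))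
  rw [aeval_shear_monomial]
  simpa using (hu.pow m).mul (hv.pow a)

end Shear

theorem stmt19_general (K : Type*) [Field K] [CharP K 2] (ε : ℕ) :
    ∀ x ∈ Submodule.span K
      {y : MvPolynomial (Fin 3) K | ∃ (γ : K) (a : ℕ), a ≤ 2 ^ (ε - 1) ∧
        y = aeval
              ![X 0 + γ ^ 2 • X 2, X 1 + γ • X 2, (X 2 : MvPolynomial (Fin 3) K)]
              ((X 0 : MvPolynomial (Fin 3) K) ^ (2 ^ (ε - 1) - a)
                * X 1 ^ (2 * a) * X 2 ^ (2 ^ (ε - 1) - a))},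
      ∀ μ ∈ x.support, Even (μ 0 + μ 2) := by
  intro x hx μ hμ
  have hx0 : x ∈ weightedHomogeneousSubmodule K parityWeight 0 := by
    refine Submodule.span_le.2 ?_ hx
    rintro _ ⟨γ, a, -, rfl⟩
    exact isWeightedHomogeneous_aeval_shear_monomial γ _ a
  exact (weight_parityWeight_eq_zero_iff μ).1 (hx0 (mem_support_iff.1 hμ))

/-- char 2. Model `Sym^{2^ε} Sym^2 E` as polynomials in the three
variables `u = X², v = XY, w = Y²` (variables `X 0, X 1, X 2`), on which
`M_γ = [[1,0],[γ,1]]` acts by the substitution `u ↦ u + γ²w`, `v ↦ v + γw`,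
`w ↦ w`.  The weight of a monomial `u^a v^b w^c` is `2(a - c)`.  The claim: every
element of the `K`-span of the images under all `M_γ` (`γ ∈ K`) of the `0`-weight
vectors `u^{2^{ε-1}-a} v^{2a} w^{2^{ε-1}-a}` has all its monomials of weight
divisible by `4`, i.e. with `a + c` even. -/
theorem stmt19 (K : Type*) [Field K] [CharP K 2] (ε : ℕ) (hε : 1 < ε)
    (hcard : ((1 + 2 * 2 ^ (ε + 1) : ℕ) : Cardinal) < Cardinal.mk K) :
    ∀ x ∈ Submodule.span K
      {y : MvPolynomial (Fin 3) K | ∃ (γ : K) (a : ℕ), a ≤ 2 ^ (ε - 1) ∧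
        y = aeval
              ![X 0 + γ ^ 2 • X 2, X 1 + γ • X 2, (X 2 : MvPolynomial (Fin 3) K)]
              ((X 0 : MvPolynomial (Fin 3) K) ^ (2 ^ (ε - 1) - a)
                * X 1 ^ (2 * a) * X 2 ^ (2 ^ (ε - 1) - a))},
      ∀ μ ∈ x.support, Even (μ 0 + μ 2) :=
  stmt19_general K ε
end
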